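/- arXiv:math/0408286 — 3 statements merged into one kernel-verified Lean document; each statement's English description precedes it below -/
import Mathlib

section
/- The intersection graph of any chord diagram is semisymmetric: for every vertex v labeled {i,i} and any other vertex w, there is an (uncancelled mod 2) directed edge from v to w if and only if there is an (uncancelled mod 2) directed edge from w to v. -/
/-- A chord diagram of degree `n` on `k` oriented strands: each chord `a : Fin n` has two
endpoints (`s : Fin 2`), each lying on a component `comp a s` at a position `pos a s`
along that component; all endpoints are distinct. -/
structure ChordDiagram (k n : ℕ) where
  comp : Fin n → Fin 2 → Fin k
  pos : Fin n → Fin 2 → ℕ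
  distinct : ∀ (a b : Fin n) (s t : Fin 2),
    comp a s = comp b t → pos a s = pos b t → a = b ∧ s = t

/-- The number of directed edges from chord `a` to chord `b` in the intersection graph
(before any mod-2 cancellation): one for each pair of endpoints of `a` and `b` lying on
the same component with the endpoint of `a` first. -/
def edgesFrom {k n : ℕ} (D : ChordDiagram k n) (a b : Fin n) : ℕ :=
  (Finset.univ.filter (fun st : Fin 2 × Fin 2 =>
    D.comp a st.1 = D.comp b st.2 ∧ D.pos a st.1 < D.pos b st.2)).card

/-!
Every pair of endpoints of two distinct chords `a`, `b` lying on a common component is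
counted exactly once in `edgesFrom D a b + edgesFrom D b a`, since the two endpoints have
different positions. If both endpoints of `a` lie on the same component, such pairs come
in twos (one for each endpoint of `a`), so the sum is even and the two summands have the
same parity.
-/

namespace ChordDiagram

variable {k n : ℕ} (D : ChordDiagram k n)

def sharedComponentPairs (a b : Fin n) : Finset (Fin 2 × Fin 2) :=
  Finset.univ.filter fun st => D.comp a st.1 = D.comp b st.2

theorem pos_ne_of_comp_eq {a b : Fin n} (hab : a ≠ b) {s t : Fin 2}
    (h : D.comp a s = D.comp b t) : D.pos a s ≠ D.pos b t :=
  fun hpos => hab (D.distinct a b s t h hpos).1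

theorem edgesFrom_eq_sum (a b : Fin n) :
    edgesFrom D a b = ∑ st : Fin 2 × Fin 2,
      if D.comp a st.1 = D.comp b st.2 ∧ D.pos a st.1 < D.pos b st.2 then 1 else 0 :=
  Finset.card_filter _ _

theorem edgesFrom_swap_eq_sum (a b : Fin n) :
    edgesFrom D b a = ∑ st : Fin 2 × Fin 2,
      if D.comp a st.1 = D.comp b st.2 ∧ D.pos b st.2 < D.pos a st.1 then 1 else 0 := by
  rw [edgesFrom_eq_sum]
  exact Fintype.sum_equiv (Equiv.prodComm _ _) _ _ fun st =>
    if_congr (and_congr_left' eq_comm) rfl rfl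

theorem edgesFrom_add_edgesFrom {a b : Fin n} (hab : a ≠ b) :
    edgesFrom D a b + edgesFrom D b a = (D.sharedComponentPairs a b).card := by
  rw [edgesFrom_eq_sum, edgesFrom_swap_eq_sum, sharedComponentPairs, Finset.card_filter,
    ← Finset.sum_add_distrib]
  refine Finset.sum_congr rfl fun st _ => ?_
  by_cases hc : D.comp a st.1 = D.comp b st.2
  · have := D.pos_ne_of_comp_eq hab hc
    split_ifs <;> omega
  · simp [hc]

theorem sharedComponentPairs_eq_product {a : Fin n} (ha : D.comp a 0 = D.comp a 1) (b : Fin n) :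
    D.sharedComponentPairs a b =
      Finset.univ ×ˢ Finset.univ.filter fun t => D.comp a 0 = D.comp b t := by
  ext ⟨s, t⟩
  fin_cases s <;> simp [sharedComponentPairs, ha]

theorem even_card_sharedComponentPairs {a : Fin n} (ha : D.comp a 0 = D.comp a 1)
    (b : Fin n) : Even (D.sharedComponentPairs a b).card := by
  rw [D.sharedComponentPairs_eq_product ha, Finset.card_product, Finset.card_univ,
    Fintype.card_fin]
  exact even_two_mul _

end ChordDiagram

/-- The intersection graph of a chord diagram is semisymmetric: for an unmarked chord
`v` (label `{i,i}`) and any other chord `w`, there is an uncancelled (mod 2) directed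
edge from `v` to `w` iff there is one from `w` to `v`. -/
theorem intersection_graph_semisymmetric {k n : ℕ} (D : ChordDiagram k n)
    (v w : Fin n) (hunmarked : D.comp v 0 = D.comp v 1) (hvw : v ≠ w) :
    (Odd (edgesFrom D v w) ↔ Odd (edgesFrom D w v)) := by
  have heven : Even (edgesFrom D v w + edgesFrom D w v) := by
    rw [D.edgesFrom_add_edgesFrom hvw]
    exact D.even_card_sharedComponentPairs hunmarked w
  rw [Nat.even_add] at heven
  simpa only [Nat.not_even_iff_odd] using not_congr heven
end

section
/- Let T be a trimmed tree with trunk v, and let w be any vertex of T other than v. Then every bough of w not containing v is light and contains no marked vertices at all. -/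
/-
Trimming forces every marked vertex other than the trunk `v` to be a neighbour of `v`.
Such a neighbour `x ≠ w` stays joined to `v` by an edge after deleting `w`, so it lies in the
bough of `w` containing `v`; hence the other boughs of `w` carry no marked vertex and are
trivially light.
-/

/-- The graph obtained from `G` by deleting the vertex `v` (and its incident edges);
its connected components are the boughs of `v`. -/
def deleteVert {V : Type*} (G : SimpleGraph V) (v : V) : SimpleGraph {x : V // x ≠ v} :=
  SimpleGraph.induce { x : V | x ≠ v } G

def LightBough {V : Type*} (G : SimpleGraph V) (marked : V → Prop) (v : V)
    (C : (deleteVert G v).ConnectedComponent) : Prop :=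
  (∀ x y : {x : V // x ≠ v},
      (deleteVert G v).connectedComponentMk x = C →
      (deleteVert G v).connectedComponentMk y = C →
      marked x.1 → marked y.1 → x = y) ∧
  (∀ x : {x : V // x ≠ v},
      (deleteVert G v).connectedComponentMk x = C →
      marked x.1 → G.Adj v x.1)

def IsTrimmed {V : Type*} (G : SimpleGraph V) (marked : V → Prop) (v : V) : Prop :=
  ∀ C : (deleteVert G v).ConnectedComponent, LightBough G marked v C

theorem IsTrimmed.adj_of_marked {V : Type*} {G : SimpleGraph V} {marked : V → Prop} {v : V}
    (htrim : IsTrimmed G marked v) {x : V} (hxv : x ≠ v) (hx : marked x) : G.Adj v x :=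
  (htrim _).2 ⟨x, hxv⟩ rfl hx

theorem deleteVert_connectedComponentMk_eq_of_adj {V : Type*} {G : SimpleGraph V} {w : V}
    {a b : {x : V // x ≠ w}} (hab : G.Adj a.1 b.1) :
    (deleteVert G w).connectedComponentMk a = (deleteVert G w).connectedComponentMk b :=
  SimpleGraph.ConnectedComponent.sound (SimpleGraph.Adj.reachable (G := deleteVert G w) hab)

theorem LightBough.of_forall_not_marked {V : Type*} {G : SimpleGraph V} {marked : V → Prop}
    {w : V} {C : (deleteVert G w).ConnectedComponent}
    (h : ∀ x : {x : V // x ≠ w}, (deleteVert G w).connectedComponentMk x = C → ¬ marked x.1) :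
    LightBough G marked w C :=
  ⟨fun x _ hx _ hmx _ => absurd hmx (h x hx), fun x hx hmx => absurd hmx (h x hx)⟩

theorem bough_avoiding_trunk_unmarked_general {V : Type*} (G : SimpleGraph V)
    (marked : V → Prop) (v : V) (htrim : IsTrimmed G marked v)
    (w : V) (hwv : w ≠ v)
    (C : (deleteVert G w).ConnectedComponent)
    (hnotv : (deleteVert G w).connectedComponentMk ⟨v, Ne.symm hwv⟩ ≠ C) :
    LightBough G marked w C ∧
      ∀ x : {x : V // x ≠ w},
        (deleteVert G w).connectedComponentMk x = C → ¬ marked x.1 := by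
  have unmarked : ∀ x : {x : V // x ≠ w},
      (deleteVert G w).connectedComponentMk x = C → ¬ marked x.1 := by
    rintro x rfl hx
    have hxv : x.1 ≠ v := fun h => hnotv (congrArg _ (Subtype.ext h.symm))
    exact hnotv (deleteVert_connectedComponentMk_eq_of_adj (htrim.adj_of_marked hxv hx))
  exact ⟨LightBough.of_forall_not_marked unmarked, unmarked⟩

/-- In a trimmed tree with trunk `v`, every bough of a vertex `w ≠ v` that does not
contain `v` is light, and in fact contains no marked vertices at all. -/
theorem bough_avoiding_trunk_unmarked {V : Type*} (G : SimpleGraph V)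
    (marked : V → Prop) (v : V) (hT : G.IsTree) (htrim : IsTrimmed G marked v)
    (w : V) (hwv : w ≠ v)
    (C : (deleteVert G w).ConnectedComponent)
    (hnotv : (deleteVert G w).connectedComponentMk ⟨v, Ne.symm hwv⟩ ≠ C) :
    LightBough G marked w C ∧
      ∀ x : {x : V // x ≠ w},
        (deleteVert G w).connectedComponentMk x = C → ¬ marked x.1 :=
  bough_avoiding_trunk_unmarked_general G marked v htrim w hwv C hnotv
end

section
/- Let T be a connected labeled directed tree that is the intersection graph of a connected chord diagram on n components, n > 2, satisfying the classification conditions. Let F be the graph obtained from T by removing all directed edges. Then each connected component of F contains exactly one marked vertex. -/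
/-- The underlying undirected simple graph of a directed (mod 2) edge relation. -/
def underlying {V : Type*} (E : V → V → Prop) : SimpleGraph V where
  Adj a b := a ≠ b ∧ (E a b ∨ E b a)
  symm := ⟨fun _ _ h => ⟨h.1.symm, h.2.symm⟩⟩
  loopless := ⟨fun _ h => h.1 rfl⟩

/-- The graph of undirected edges only: an undirected edge is a pair of directed edges
in both directions. -/
def undirGraph {V : Type*} (E : V → V → Prop) : SimpleGraph V where
  Adj a b := a ≠ b ∧ E a b ∧ E b a
  symm := ⟨fun _ _ h => ⟨h.1.symm, h.2.2, h.2.1⟩⟩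
  loopless := ⟨fun _ h => h.1 rfl⟩

/-- The number of vertices labeled `{i,j}`. -/
noncomputable def mcount {V : Type*} {n : ℕ} (label : V → Sym2 (Fin n)) (i j : Fin n) : ℕ :=
  Nat.card {v : V // label v = s(i, j)}

/-- The classification conditions (Theorem `T:treeclass`) for a connected labeled
directed tree `(E, label)` with colors `0, …, n-1` (the paper's colors `1, …, n`):
1. labels of adjacent vertices share a color;
2. semisymmetry: a vertex labeled `{i,i}` has a directed edge to `w` iff one from `w`;
3. vertices labeled `{i,j}` and `{i,k}` with `i,j,k` distinct carry a directed edge;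
4. `m_{i,j} = 0` when `|i - j| > 1`;
5. `m_{i,i+1} = 1` for the middle colors, `m_{0,1} ≥ 1` and `m_{n-2,n-1} ≥ 1`;
6. no two marked vertices are connected by a path of undirected edges. -/
def ClassCond {V : Type*} (n : ℕ) (E : V → V → Prop) (label : V → Sym2 (Fin n)) : Prop :=
  (underlying E).IsTree ∧
  (∀ u v, (underlying E).Adj u v → ∃ c, c ∈ label u ∧ c ∈ label v) ∧
  (∀ v w, (label v).IsDiag → (E v w ↔ E w v)) ∧
  (∀ (v w : V) (i j k : Fin n), i ≠ j → i ≠ k → j ≠ k →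
      label v = s(i, j) → label w = s(i, k) → (E v w ∨ E w v)) ∧
  (∀ (v : V) (i j : Fin n), label v = s(i, j) → (i : ℕ) ≤ (j : ℕ) + 1 ∧ (j : ℕ) ≤ (i : ℕ) + 1) ∧
  (∀ (i : ℕ) (hi : i < n) (hi1 : i + 1 < n), 1 ≤ i → i + 1 ≤ n - 2 →
      mcount label ⟨i, hi⟩ ⟨i + 1, hi1⟩ = 1) ∧
  (∀ (h0 : 0 < n) (h1 : 1 < n), 1 ≤ mcount label ⟨0, h0⟩ ⟨1, h1⟩) ∧
  (∀ (h0 : n - 2 < n) (h1 : n - 1 < n), 1 ≤ mcount label ⟨n - 2, h0⟩ ⟨n - 1, h1⟩) ∧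
  (∀ u v : V, ¬ (label u).IsDiag → ¬ (label v).IsDiag → u ≠ v →
      ¬ Relation.ReflTransGen (fun a b => a ≠ b ∧ E a b ∧ E b a) u v)

/-- For a connected labeled directed tree satisfying the classification conditions
for intersection graphs of connected chord diagrams on `n > 2` components, each
connected component of the forest `F` obtained by removing all directed edges
(keeping only undirected edges) contains exactly one marked vertex. -/
theorem undirected_components_unique_marked {V : Type*} [Fintype V] {n : ℕ}
    (hn : 2 < n) (E : V → V → Prop) (label : V → Sym2 (Fin n))
    (hclass : ClassCond n E label)
    (C : (undirGraph E).ConnectedComponent) :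
    ∃! v : V, (undirGraph E).connectedComponentMk v = C ∧ ¬ (label v).IsDiag := by
  obtain ⟨htree, _, hsemi, _, _, _, h01, _, hnodup⟩ := hclass
  have h0 : (0 : ℕ) < n := by omega
  have h1 : (1 : ℕ) < n := by omega
  -- a marked vertex exists
  have hcard := h01 h0 h1
  have hne : Nonempty {v : V // label v = s(⟨0, h0⟩, ⟨1, h1⟩)} :=
    (Nat.card_pos_iff.mp (show 0 < Nat.card {v : V // label v = s(⟨0, h0⟩, ⟨1, h1⟩)} from hcard)).1
  obtain ⟨v0, hv0⟩ := hne
  have hv0m : ¬ (label v0).IsDiag := by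
    rw [hv0, Sym2.isDiag_iff_proj_eq]
    intro h
    have : (0 : ℕ) = 1 := congrArg Fin.val h
    omega
  -- any component consisting only of diagonal vertices is everything
  obtain ⟨u, hu⟩ := C.exists_rep
  -- existence
  have hex : ∃ v : V, (undirGraph E).connectedComponentMk v = C ∧ ¬ (label v).IsDiag := by
    by_contra hno
    push_neg at hno
    have hall : ∀ w, (undirGraph E).connectedComponentMk w = C → (label w).IsDiag := by
      intro w hw
      by_contra h
      exact h (hno w hw)
    -- reach from u to v0 in the underlying tree
    have hreach : (underlying E).Reachable u v0 := htree.isConnected.1 u v0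
    have key : ∀ v, Relation.ReflTransGen (underlying E).Adj u v →
        (undirGraph E).connectedComponentMk v = C := by
      intro v hv
      induction hv with
      | refl => exact hu
      | tail _ hadj ih =>
        rename_i w v _ 
        have hwdiag := hall w ih
        obtain ⟨hne', hE⟩ := hadj
        have hEwv : E w v ∧ E v w := by
          rcases hE with h | h
          · exact ⟨h, (hsemi w v hwdiag).mp h⟩
          · exact ⟨(hsemi w v hwdiag).mpr h, h⟩
        have : (undirGraph E).Adj w v := ⟨hne', hEwv.1, hEwv.2⟩
        rw [← ih]
        exact (SimpleGraph.ConnectedComponent.sound this.symm.reachable)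
    have := hall v0 (key v0 ((SimpleGraph.reachable_iff_reflTransGen u v0).mp hreach))
    exact hv0m this
  obtain ⟨v, hvC, hvm⟩ := hex
  refine ⟨v, ⟨hvC, hvm⟩, ?_⟩
  rintro w ⟨hwC, hwm⟩
  by_contra hne'
  have hreach : (undirGraph E).Reachable w v :=
    SimpleGraph.ConnectedComponent.exact (hwC.trans hvC.symm)
  have := (SimpleGraph.reachable_iff_reflTransGen w v).mp hreach
  exact hnodup w v hwm hvm hne' this
end
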